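/- arXiv:1808.08712 — 2 statements merged into one kernel-verified Lean document; each statement's English description precedes it below -/
import Mathlib

section
/- Let Θ be a nonempty index set and (κ_θ)_{θ∈Θ} a family of Markov kernels on ℝ^d with nonlinear Markov operator P̄f(x) = sup_{θ∈Θ} ∫ f dκ_θ(x,·); assume x ↦ P̄f(x) is Borel measurable for every bounded Borel measurable f ≥ 0. Let Φ : [0,∞) → [0,∞) be increasing with lim_{r→∞} Φ(r) = ∞, Ψ : ℝ^d × ℝ^d → [0,∞) Borel measurable, and assume the Harnack-type inequality Φ(P̄f(x)) ≤ P̄(Φ∘f)(y)·e^{Ψ(x,y)} for all bounded Borel measurable f ≥ 0 and all x, y ∈ ℝ^d. Suppose μ is a quasi-invariant linear expectation of P̄ and that there are jointly Borel measurable functions p_θ : ℝ^d × ℝ^d → [0,∞) with κ_θ(x, A) = ∫_A p_θ(x,y) μ(dy) for all θ, x and Borel A, and a constant K > 0 such that (1/K)·p_{θ₁}(x,y) ≤ p_{θ₂}(x,y) ≤ K·p_{θ₁}(x,y) for all θ₁, θ₂ ∈ Θ and x, y ∈ ℝ^d. Then P̄ has at most one invariant linear expectation: any two invariant linear expectations μ₀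 and μ₁ of P̄ are equal. -/
/-!
Testing the nonlinear invariance of `ν` on indicators gives `∫ κ_θ(·, B) dν ≤ ν B` for every `B`;
applied to `B` and `Bᶜ` this makes every invariant linear expectation invariant for each single
kernel `κ_θ`. Comparable densities make the measures `κ_θ(x, ·)`, `θ ∈ Θ`, equivalent, and the
Harnack inequality, tested on large multiples of `1_A`, shows that a set which is null for all
`κ_θ(y, ·)` is null for all `κ_θ(x, ·)`. So a single kernel `κ_θ₀` has pairwise equivalent
transition probabilities. For such a kernel write `μ₀ - μ₁ = ν₀ - ν₁` with `ν₀` carried by the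
Hahn set `s` and `ν₁` by `sᶜ`: invariance forces `κ(·, s)` to vanish `ν₁`-a.e. and to equal `1`
`ν₀`-a.e. Since `κ(·, s)` vanishes everywhere or nowhere, one of `ν₀`, `ν₁` is zero, and having
the same mass, both are.
-/

open MeasureTheory ProbabilityTheory Filter

/-- The nonlinear Markov operator `P̄ f x = ⨆ θ, ∫ f dκ_θ(x,·)` associated with a family
of Markov kernels on `ℝ^d`. -/
noncomputable def nlOp {d : ℕ} {Θ : Type*}
    (κ : Θ → Kernel (EuclideanSpace ℝ (Fin d)) (EuclideanSpace ℝ (Fin d)))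
    (f : EuclideanSpace ℝ (Fin d) → ℝ) (x : EuclideanSpace ℝ (Fin d)) : ℝ :=
  ⨆ θ, ∫ y, f y ∂(κ θ x)

open scoped ENNReal

namespace MeasureTheory.Measure

variable {α : Type*} [MeasurableSpace α]

/-- Jordan decomposition of `μ₀ - μ₁`, written without subtraction. -/
lemma exists_jordan_add_eq_add (μ₀ μ₁ : Measure α) [IsFiniteMeasure μ₀] [IsFiniteMeasure μ₁] :
    ∃ s, MeasurableSet s ∧ ∃ ν₀ ν₁ : Measure α, ν₀ sᶜ = 0 ∧ ν₁ s = 0 ∧ μ₀ + ν₁ = μ₁ + ν₀ := by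
  obtain ⟨s, hs, hs₁, hs₂⟩ := hahn_decomposition μ₀ μ₁
  have hle₀ : μ₁.restrict s ≤ μ₀.restrict s := le_iff.2 fun A hA => by
    simpa only [restrict_apply hA] using hs₁ _ (hA.inter hs) Set.inter_subset_right
  have hle₁ : μ₀.restrict sᶜ ≤ μ₁.restrict sᶜ := le_iff.2 fun A hA => by
    simpa only [restrict_apply hA] using hs₂ _ (hA.inter hs.compl) Set.inter_subset_right
  refine ⟨s, hs, μ₀.restrict s - μ₁.restrict s, μ₁.restrict sᶜ - μ₀.restrict sᶜ,
    le_zero_iff.1 ((le_iff'.1 sub_le sᶜ).trans_eq (by simp [restrict_apply hs.compl])),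
    le_zero_iff.1 ((le_iff'.1 sub_le s).trans_eq (by simp [restrict_apply hs])), ?_⟩
  have key : ∀ a b c e : Measure α, [IsFiniteMeasure b] → [IsFiniteMeasure c] → b ≤ a → c ≤ e →
      (a + c) + (e - c) = (b + e) + (a - b) := by
    intro a b c e _ _ hba hce
    rw [add_assoc, add_comm c, sub_add_cancel_of_le hce, add_comm b, add_assoc, add_comm b,
      sub_add_cancel_of_le hba, add_comm]
  simpa only [restrict_add_restrict_compl hs] using key _ _ _ _ hle₀ hle₁

lemma absolutelyContinuous_of_density_le {μ ρ ρ' : Measure α} {q q' : α → ℝ} {K : ℝ}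
    (hK : 0 ≤ K) (hρ : ∀ A, MeasurableSet A → ρ A = ∫⁻ y in A, ENNReal.ofReal (q y) ∂μ)
    (hρ' : ∀ A, MeasurableSet A → ρ' A = ∫⁻ y in A, ENNReal.ofReal (q' y) ∂μ)
    (hle : ∀ y, q' y ≤ K * q y) : ρ' ≪ ρ := by
  refine absolutelyContinuous_of_le_smul (c := ENNReal.ofReal K) (le_iff.2 fun A hA => ?_)
  rw [smul_apply, hρ A hA, hρ' A hA, smul_eq_mul, ← lintegral_const_mul' _ _ ENNReal.ofReal_ne_top]
  refine lintegral_mono fun y => ?_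
  rw [← ENNReal.ofReal_mul hK]
  exact ENNReal.ofReal_le_ofReal (hle y)

end MeasureTheory.Measure

namespace ProbabilityTheory.Kernel

variable {α : Type*} [MeasurableSpace α] {κ : Kernel α α}

lemma Invariant.lintegral_eq {μ : Measure α} (h : κ.Invariant μ) {s : Set α}
    (hs : MeasurableSet s) : ∫⁻ x, κ x s ∂μ = μ s := by
  rw [← Measure.bind_apply hs κ.aemeasurable, h.def]

theorem Invariant.eq_of_absolutelyContinuous [IsMarkovKernel κ] (hac : ∀ x y, κ x ≪ κ y)
    {μ₀ μ₁ : Measure α} [IsProbabilityMeasure μ₀] [IsProbabilityMeasure μ₁]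
    (h₀ : κ.Invariant μ₀) (h₁ : κ.Invariant μ₁) : μ₀ = μ₁ := by
  obtain ⟨s, hs, ν₀, ν₁, hν₀, hν₁, hsum⟩ := Measure.exists_jordan_add_eq_add μ₀ μ₁
  have hμ₀s : μ₀ s = μ₁ s + ν₀ s := by simpa [hν₁] using congrArg (· s) hsum
  have hmass : ν₁ Set.univ = ν₀ Set.univ := by
    simpa using congrArg (· Set.univ) hsum
  have hν₀univ : ν₀ Set.univ = ν₀ s := by
    rw [← measure_add_measure_compl hs, hν₀, add_zero]
  have hfin : μ₁ s + ν₀ s ≠ ∞ := hμ₀s ▸ measure_ne_top μ₀ s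
  -- integrate `κ · s` against both sides of `hsum` and use invariance
  have hint : μ₀ s + ∫⁻ x, κ x s ∂ν₁ = μ₁ s + ∫⁻ x, κ x s ∂ν₀ := by
    simpa only [lintegral_add_measure, h₀.lintegral_eq hs, h₁.lintegral_eq hs] using
      congrArg (fun ν => ∫⁻ x, κ x s ∂ν) hsum
  have hle : ∫⁻ x, κ x s ∂ν₀ ≤ ν₀ s :=
    hν₀univ ▸ (lintegral_mono fun x => prob_le_one).trans_eq lintegral_one
  have hν₁int : ∫⁻ x, κ x s ∂ν₁ = 0 := by
    refine le_zero_iff.1 ((ENNReal.add_le_add_iff_left hfin).1 ?_)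
    rw [add_zero, ← hμ₀s, hint, hμ₀s]
    gcongr
  have hν₀int : ∫⁻ x, κ x s ∂ν₀ = ν₀ s := by
    rw [hν₁int, add_zero, hμ₀s] at hint
    exact ((ENNReal.add_right_inj (measure_ne_top μ₁ s)).1 hint).symm
  suffices ν₀ = 0 by
    have hν₁ : ν₁ = 0 := Measure.measure_univ_eq_zero.1 (hmass.trans (by simp [this]))
    rwa [this, hν₁, add_zero, add_zero] at hsum
  -- by `hac`, `κ · s` vanishes either everywhere or nowhere
  by_cases hnull : ∃ x, κ x s = 0
  · obtain ⟨x, hx⟩ := hnull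
    rw [← Measure.measure_univ_eq_zero, hν₀univ, ← hν₀int,
      lintegral_congr fun y => hac y x hx, lintegral_zero]
  · push Not at hnull
    have hae : ∀ᵐ x ∂ν₁, False :=
      ((lintegral_eq_zero_iff (κ.measurable_coe hs)).1 hν₁int).mono fun x hx => hnull x hx
    rw [← Measure.measure_univ_eq_zero, ← hmass, ae_eq_bot.1 (eventually_false_iff_eq_bot.1 hae),
      Measure.coe_zero, Pi.zero_apply]

end ProbabilityTheory.Kernel

section NonlinearOperator

variable {d : ℕ} {Θ : Type*} {κ : Θ → Kernel (EuclideanSpace ℝ (Fin d)) (EuclideanSpace ℝ (Fin d))}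

lemma nlOp_smul {c : ℝ} (hc : 0 ≤ c) (f : EuclideanSpace ℝ (Fin d) → ℝ)
    (x : EuclideanSpace ℝ (Fin d)) : nlOp κ (c • f) x = c * nlOp κ f x := by
  simp only [nlOp, Pi.smul_apply, smul_eq_mul, integral_const_mul, Real.mul_iSup_of_nonneg hc]

lemma nlOp_congr_ae {f g : EuclideanSpace ℝ (Fin d) → ℝ} {x : EuclideanSpace ℝ (Fin d)}
    (h : ∀ θ, f =ᵐ[κ θ x] g) : nlOp κ f x = nlOp κ g x :=
  iSup_congr fun θ => integral_congr_ae (h θ)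

lemma nlOp_const [Nonempty Θ] [∀ θ, IsMarkovKernel (κ θ)] (c : ℝ) (x : EuclideanSpace ℝ (Fin d)) :
    nlOp κ (fun _ => c) x = c := by
  simp [nlOp]

lemma nlOp_indicator_one {B : Set (EuclideanSpace ℝ (Fin d))} (hB : MeasurableSet B)
    (x : EuclideanSpace ℝ (Fin d)) : nlOp κ (B.indicator 1) x = ⨆ θ, (κ θ x).real B := by
  simp only [nlOp, integral_indicator_one hB]

lemma measureReal_le_nlOp_indicator_one [∀ θ, IsMarkovKernel (κ θ)]
    {B : Set (EuclideanSpace ℝ (Fin d))} (hB : MeasurableSet B) (θ : Θ)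
    (x : EuclideanSpace ℝ (Fin d)) : (κ θ x).real B ≤ nlOp κ (B.indicator 1) x := by
  rw [nlOp_indicator_one hB]
  exact le_ciSup (f := fun θ => (κ θ x).real B)
    ⟨1, by rintro _ ⟨θ, rfl⟩; exact measureReal_le_one⟩ θ

lemma nlOp_indicator_one_le_one [Nonempty Θ] [∀ θ, IsMarkovKernel (κ θ)]
    {B : Set (EuclideanSpace ℝ (Fin d))} (hB : MeasurableSet B) (x : EuclideanSpace ℝ (Fin d)) :
    nlOp κ (B.indicator 1) x ≤ 1 := by
  rw [nlOp_indicator_one hB]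
  exact ciSup_le fun θ => measureReal_le_one

lemma invariant_of_integral_nlOp_eq [Nonempty Θ] [∀ θ, IsMarkovKernel (κ θ)]
    (hPmeas : ∀ f : EuclideanSpace ℝ (Fin d) → ℝ, Measurable f → (∀ y, 0 ≤ f y) →
      (∃ C, ∀ y, f y ≤ C) → Measurable (nlOp κ f))
    {ν : Measure (EuclideanSpace ℝ (Fin d))} [IsProbabilityMeasure ν]
    (hinv : ∀ f : EuclideanSpace ℝ (Fin d) → ℝ, Measurable f → (∀ y, 0 ≤ f y) →
      (∃ C, ∀ y, f y ≤ C) → ∫ x, nlOp κ f x ∂ν = ∫ x, f x ∂ν) (θ : Θ) :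
    (κ θ).Invariant ν := by
  refine Measure.eq_of_le_of_isProbabilityMeasure (Measure.le_iff.2 fun B hB => ?_)
  have hf_meas : Measurable (B.indicator (1 : EuclideanSpace ℝ (Fin d) → ℝ)) :=
    measurable_one.indicator hB
  have hf_nonneg : ∀ y, 0 ≤ B.indicator (1 : EuclideanSpace ℝ (Fin d) → ℝ) y :=
    Set.indicator_nonneg fun _ _ => zero_le_one
  have hf_le : ∀ y, B.indicator (1 : EuclideanSpace ℝ (Fin d) → ℝ) y ≤ 1 :=
    Set.indicator_le_self' fun _ _ => zero_le_one
  have hP_nonneg : ∀ x, 0 ≤ nlOp κ (B.indicator 1) x := fun x =>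
    measureReal_nonneg.trans (measureReal_le_nlOp_indicator_one hB θ x)
  have hP_int : Integrable (nlOp κ (B.indicator 1)) ν :=
    .of_bound (hPmeas _ hf_meas hf_nonneg ⟨1, hf_le⟩).aestronglyMeasurable 1 <|
      ae_of_all _ fun x => by
        rw [Real.norm_of_nonneg (hP_nonneg x)]
        exact nlOp_indicator_one_le_one hB x
  have hinvB := hinv _ hf_meas hf_nonneg ⟨1, hf_le⟩
  rw [integral_indicator_one hB] at hinvB
  calc (ν.bind (κ θ)) B = ∫⁻ x, κ θ x B ∂ν := Measure.bind_apply hB (κ θ).aemeasurable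
    _ ≤ ∫⁻ x, ENNReal.ofReal (nlOp κ (B.indicator 1) x) ∂ν := lintegral_mono fun x => by
      rw [← ofReal_measureReal]
      exact ENNReal.ofReal_le_ofReal (measureReal_le_nlOp_indicator_one hB θ x)
    _ = ν B := by
      rw [← ofReal_integral_eq_lintegral_ofReal hP_int (ae_of_all _ hP_nonneg), hinvB,
        ofReal_measureReal]

lemma measure_eq_zero_of_harnack [Nonempty Θ] [∀ θ, IsMarkovKernel (κ θ)] {Φ : ℝ → ℝ}
    {Ψ : EuclideanSpace ℝ (Fin d) → EuclideanSpace ℝ (Fin d) → ℝ} (hΦ : Tendsto Φ atTop atTop)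
    (hHarnack : ∀ f : EuclideanSpace ℝ (Fin d) → ℝ, Measurable f → (∀ y, 0 ≤ f y) →
      (∃ C, ∀ y, f y ≤ C) → ∀ x y,
      Φ (nlOp κ f x) ≤ nlOp κ (fun z => Φ (f z)) y * Real.exp (Ψ x y))
    {A : Set (EuclideanSpace ℝ (Fin d))} (hA : MeasurableSet A) {y : EuclideanSpace ℝ (Fin d)}
    (hy : ∀ θ, κ θ y A = 0) (θ : Θ) (x : EuclideanSpace ℝ (Fin d)) : κ θ x A = 0 := by
  by_contra hne
  set ε := nlOp κ (A.indicator 1) x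
  have hε : 0 < ε := (ENNReal.toReal_pos hne (measure_ne_top _ _)).trans_le
    (measureReal_le_nlOp_indicator_one hA θ x)
  -- the Harnack inequality fails for a large enough multiple of the indicator of `A`
  obtain ⟨r, hr, hr0⟩ : ∃ r, Φ 0 * Real.exp (Ψ x y) < Φ r ∧ 0 ≤ r :=
    ((hΦ.eventually_gt_atTop _).and (eventually_ge_atTop 0)).exists
  set f := (r / ε) • A.indicator (1 : EuclideanSpace ℝ (Fin d) → ℝ)
  have hfx : nlOp κ f x = r := by
    rw [nlOp_smul (div_nonneg hr0 hε.le), div_mul_cancel₀ r hε.ne']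
  have hfy : nlOp κ (fun z => Φ (f z)) y = Φ 0 := by
    rw [nlOp_congr_ae (g := fun _ => Φ 0), nlOp_const]
    intro θ'
    filter_upwards [measure_eq_zero_iff_ae_notMem.1 (hy θ')] with z hz
    simp [f, hz]
  have hH := hHarnack f ((measurable_one.indicator hA).const_smul _)
    (fun z => smul_nonneg (div_nonneg hr0 hε.le) (Set.indicator_nonneg (fun _ _ => zero_le_one) z))
    ⟨r / ε, fun z => by by_cases hz : z ∈ A <;> simp [f, hz, div_nonneg hr0 hε.le]⟩ x y
  rw [hfx, hfy] at hH
  exact hr.not_ge hH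

end NonlinearOperator

theorem stmt_3_general {d : ℕ} {Θ : Type*} [Nonempty Θ]
    (κ : Θ → Kernel (EuclideanSpace ℝ (Fin d)) (EuclideanSpace ℝ (Fin d)))
    (hκ : ∀ θ, IsMarkovKernel (κ θ))
    (hPmeas : ∀ f : EuclideanSpace ℝ (Fin d) → ℝ, Measurable f → (∀ y, 0 ≤ f y) →
      (∃ C, ∀ y, f y ≤ C) → Measurable (nlOp κ f))
    (Φ : ℝ → ℝ)
    (hΦtop : Tendsto Φ atTop atTop)
    (Ψ : EuclideanSpace ℝ (Fin d) → EuclideanSpace ℝ (Fin d) → ℝ)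
    (hHarnack : ∀ f : EuclideanSpace ℝ (Fin d) → ℝ, Measurable f → (∀ y, 0 ≤ f y) →
      (∃ C, ∀ y, f y ≤ C) → ∀ x y,
      Φ (nlOp κ f x) ≤ nlOp κ (fun z => Φ (f z)) y * Real.exp (Ψ x y))
    (μ : Measure (EuclideanSpace ℝ (Fin d)))
    -- densities p_θ of the kernels with respect to μ
    (p : Θ → EuclideanSpace ℝ (Fin d) → EuclideanSpace ℝ (Fin d) → ℝ)
    (hdens : ∀ θ x (A : Set (EuclideanSpace ℝ (Fin d))), MeasurableSet A →
      κ θ x A = ∫⁻ y in A, ENNReal.ofReal (p θ x y) ∂μ)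
    -- uniform comparability of the densities
    (K : ℝ) (hK : 0 < K)
    (hcomp : ∀ θ₁ θ₂ x y, (1/K) * p θ₁ x y ≤ p θ₂ x y ∧ p θ₂ x y ≤ K * p θ₁ x y)
    -- two invariant linear expectations
    (μ₀ μ₁ : Measure (EuclideanSpace ℝ (Fin d)))
    [IsProbabilityMeasure μ₀] [IsProbabilityMeasure μ₁]
    (hinv₀ : ∀ f : EuclideanSpace ℝ (Fin d) → ℝ, Measurable f → (∀ y, 0 ≤ f y) →
      (∃ C, ∀ y, f y ≤ C) → ∫ x, nlOp κ f x ∂μ₀ = ∫ x, f x ∂μ₀)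
    (hinv₁ : ∀ f : EuclideanSpace ℝ (Fin d) → ℝ, Measurable f → (∀ y, 0 ≤ f y) →
      (∃ C, ∀ y, f y ≤ C) → ∫ x, nlOp κ f x ∂μ₁ = ∫ x, f x ∂μ₁) :
    μ₀ = μ₁ := by
  obtain ⟨θ₀⟩ := ‹Nonempty Θ›
  have hac : ∀ θ θ' x, κ θ x ≪ κ θ' x := fun θ θ' x =>
    Measure.absolutelyContinuous_of_density_le hK.le (hdens θ' x) (hdens θ x)
      fun y => (hcomp θ' θ x y).2
  refine Kernel.Invariant.eq_of_absolutelyContinuous (κ := κ θ₀) (fun x y => ?_)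
    (invariant_of_integral_nlOp_eq hPmeas hinv₀ θ₀) (invariant_of_integral_nlOp_eq hPmeas hinv₁ θ₀)
  refine Measure.AbsolutelyContinuous.mk fun A hA hy => ?_
  exact measure_eq_zero_of_harnack hΦtop hHarnack hA (fun θ => hac θ θ₀ y hy) θ₀ x

theorem stmt_3 {d : ℕ} {Θ : Type*} [Nonempty Θ]
    (κ : Θ → Kernel (EuclideanSpace ℝ (Fin d)) (EuclideanSpace ℝ (Fin d)))
    (hκ : ∀ θ, IsMarkovKernel (κ θ))
    (hPmeas : ∀ f : EuclideanSpace ℝ (Fin d) → ℝ, Measurable f → (∀ y, 0 ≤ f y) →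
      (∃ C, ∀ y, f y ≤ C) → Measurable (nlOp κ f))
    (Φ : ℝ → ℝ)
    (hΦmono : MonotoneOn Φ (Set.Ici 0))
    (hΦnonneg : ∀ r ∈ Set.Ici (0:ℝ), 0 ≤ Φ r)
    (hΦtop : Tendsto Φ atTop atTop)
    (Ψ : EuclideanSpace ℝ (Fin d) → EuclideanSpace ℝ (Fin d) → ℝ)
    (hΨmeas : Measurable (Function.uncurry Ψ))
    (hΨnonneg : ∀ x y, 0 ≤ Ψ x y)
    (hHarnack : ∀ f : EuclideanSpace ℝ (Fin d) → ℝ, Measurable f → (∀ y, 0 ≤ f y) →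
      (∃ C, ∀ y, f y ≤ C) → ∀ x y,
      Φ (nlOp κ f x) ≤ nlOp κ (fun z => Φ (f z)) y * Real.exp (Ψ x y))
    -- μ is a quasi-invariant linear expectation of P̄, with witness g
    (μ : Measure (EuclideanSpace ℝ (Fin d))) [IsProbabilityMeasure μ]
    (g : EuclideanSpace ℝ (Fin d) → ℝ) (hgmeas : Measurable g)
    (hg0 : ∀ x, 0 ≤ g x) (hgbd : ∃ C, ∀ x, g x ≤ C)
    (hquasi : ∀ f : EuclideanSpace ℝ (Fin d) → ℝ, Measurable f → (∀ y, 0 ≤ f y) →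
      (∃ C, ∀ y, f y ≤ C) → ∫ x, nlOp κ f x ∂μ ≤ ∫ x, g x * f x ∂μ)
    -- densities p_θ of the kernels with respect to μ
    (p : Θ → EuclideanSpace ℝ (Fin d) → EuclideanSpace ℝ (Fin d) → ℝ)
    (hpmeas : ∀ θ, Measurable (Function.uncurry (p θ)))
    (hp0 : ∀ θ x y, 0 ≤ p θ x y)
    (hdens : ∀ θ x (A : Set (EuclideanSpace ℝ (Fin d))), MeasurableSet A →
      κ θ x A = ∫⁻ y in A, ENNReal.ofReal (p θ x y) ∂μ)
    -- uniform comparability of the densities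
    (K : ℝ) (hK : 0 < K)
    (hcomp : ∀ θ₁ θ₂ x y, (1/K) * p θ₁ x y ≤ p θ₂ x y ∧ p θ₂ x y ≤ K * p θ₁ x y)
    -- two invariant linear expectations
    (μ₀ μ₁ : Measure (EuclideanSpace ℝ (Fin d)))
    [IsProbabilityMeasure μ₀] [IsProbabilityMeasure μ₁]
    (hinv₀ : ∀ f : EuclideanSpace ℝ (Fin d) → ℝ, Measurable f → (∀ y, 0 ≤ f y) →
      (∃ C, ∀ y, f y ≤ C) → ∫ x, nlOp κ f x ∂μ₀ = ∫ x, f x ∂μ₀)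
    (hinv₁ : ∀ f : EuclideanSpace ℝ (Fin d) → ℝ, Measurable f → (∀ y, 0 ≤ f y) →
      (∃ C, ∀ y, f y ≤ C) → ∫ x, nlOp κ f x ∂μ₁ = ∫ x, f x ∂μ₁) :
    μ₀ = μ₁ :=
  stmt_3_general κ hκ hPmeas Φ hΦtop Ψ hHarnack μ p hdens K hK hcomp μ₀ μ₁ hinv₀ hinv₁
end

section
/- Let Θ be a nonempty index set and (κ_θ)_{θ∈Θ} a family of Markov kernels on ℝ^d with nonlinear Markov operator P̄f(x) = sup_{θ∈Θ} ∫ f dκ_θ(x,·); assume x ↦ P̄f(x) is Borel measurable for every bounded Borel measurable f ≥ 0. Let Φ : [0,∞) → [0,∞) be increasing with lim_{r→∞} Φ(r) = ∞, Ψ : ℝ^d × ℝ^d → [0,∞) a function, and assume the Harnack-type inequality Φ(P̄f(x)) ≤ P̄(Φ∘f)(y)·e^{Ψ(x,y)} for all bounded Borel measurable f ≥ 0 and all x, y ∈ ℝ^d. Let μ₀ be an invariant linear expectation of P̄. If A ⊆ ℝ^d is Borel and P̄1_A(x₀) = 0 for some x₀ ∈ ℝ^d, then P̄1_A ≡ 0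 and μ₀(A) = 0. -/
/-!
Write `t = P̄1_A(x)`. Applying the Harnack inequality to `n • 1_A` between `x` and `x₀` gives
`Φ(n t) ≤ P̄(Φ ∘ (n • 1_A))(x₀) e^{Ψ(x,x₀)} = Φ(0) e^{Ψ(x,x₀)}`, because every `κ_θ(x₀,·)` is
carried by `Aᶜ`. As `Φ → ∞`, this bound for all `n` forces `t = 0`. Invariance of `μ₀` then gives
`μ₀(A) = ∫ P̄1_A dμ₀ = 0`.
-/

open MeasureTheory ProbabilityTheory Filter

lemma eq_zero_of_forall_nat_mul_le {β : Type*} [Preorder β] [NoMaxOrder β] {Φ : ℝ → β}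
    (hΦ : Tendsto Φ atTop atTop) {t : ℝ} {C : β} (ht : 0 ≤ t) (h : ∀ n : ℕ, Φ (t * n) ≤ C) :
    t = 0 := by
  by_contra hne
  have htend : Tendsto (fun n : ℕ => Φ (t * n)) atTop atTop :=
    hΦ.comp (tendsto_natCast_atTop_atTop.const_mul_atTop (ht.lt_of_ne' hne))
  obtain ⟨n, hn⟩ := (htend.eventually_gt_atTop C).exists
  exact (h n).not_gt hn

lemma measurable_nonneg_bddAbove_indicator_const {α : Type*} [MeasurableSpace α] {A : Set α}
    (hA : MeasurableSet A) {b : ℝ} (hb : 0 ≤ b) :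
    Measurable (A.indicator fun _ => b) ∧ (∀ y, 0 ≤ A.indicator (fun _ => b) y) ∧
      ∃ C, ∀ y, A.indicator (fun _ => b) y ≤ C :=
  ⟨measurable_const.indicator hA, fun _ => Set.indicator_nonneg (fun _ _ => hb) _,
    b, fun _ => Set.indicator_apply_le' (fun _ => le_rfl) fun _ => hb⟩

section nlOp

variable {d : ℕ} {Θ : Type*} {κ : Θ → Kernel (EuclideanSpace ℝ (Fin d)) (EuclideanSpace ℝ (Fin d))}
  {A : Set (EuclideanSpace ℝ (Fin d))} {x : EuclideanSpace ℝ (Fin d)}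

lemma nlOp_nonneg {f : EuclideanSpace ℝ (Fin d) → ℝ} (hf : ∀ y, 0 ≤ f y) : 0 ≤ nlOp κ f x :=
  Real.iSup_nonneg fun _ => integral_nonneg hf

lemma nlOp_indicator_const (hA : MeasurableSet A) (b : ℝ) :
    nlOp κ (A.indicator fun _ => b) x = ⨆ θ, (κ θ x).real A * b := by
  simp only [nlOp, integral_indicator_const b hA, smul_eq_mul]

lemma nlOp_indicator_const_of_nonneg (hA : MeasurableSet A) {b : ℝ} (hb : 0 ≤ b) :
    nlOp κ (A.indicator fun _ => b) x = nlOp κ (A.indicator fun _ => 1) x * b := by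
  simp only [nlOp_indicator_const hA, mul_one, Real.iSup_mul_of_nonneg hb]

lemma measure_eq_zero_of_nlOp_indicator_eq_zero [∀ θ, IsMarkovKernel (κ θ)]
    (hA : MeasurableSet A) (h : nlOp κ (A.indicator fun _ => 1) x = 0) (θ : Θ) :
    κ θ x A = 0 := by
  rw [nlOp_indicator_const hA] at h
  simp only [mul_one] at h
  have hbdd : BddAbove (Set.range fun θ => (κ θ x).real A) :=
    ⟨1, by rintro _ ⟨θ, rfl⟩; exact measureReal_le_one⟩
  exact (measureReal_eq_zero_iff).1 (le_antisymm (h ▸ le_ciSup hbdd θ) measureReal_nonneg)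

lemma nlOp_eq_of_eqOn_compl [Nonempty Θ] [∀ θ, IsMarkovKernel (κ θ)]
    (hA : ∀ θ, κ θ x A = 0) {f : EuclideanSpace ℝ (Fin d) → ℝ} {c : ℝ}
    (hf : ∀ y ∉ A, f y = c) : nlOp κ f x = c := by
  have hint : ∀ θ, ∫ y, f y ∂κ θ x = c := fun θ => by
    rw [integral_congr_ae ((measure_eq_zero_iff_ae_notMem.1 (hA θ)).mono hf)]
    simp
  simp only [nlOp, hint, ciSup_const]

end nlOp

theorem stmt_4_general {d : ℕ} {Θ : Type*} [Nonempty Θ]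
    (κ : Θ → Kernel (EuclideanSpace ℝ (Fin d)) (EuclideanSpace ℝ (Fin d)))
    (hκ : ∀ θ, IsMarkovKernel (κ θ))
    (Φ : ℝ → ℝ)
    (hΦtop : Tendsto Φ atTop atTop)
    (Ψ : EuclideanSpace ℝ (Fin d) → EuclideanSpace ℝ (Fin d) → ℝ)
    (hHarnack : ∀ f : EuclideanSpace ℝ (Fin d) → ℝ, Measurable f → (∀ y, 0 ≤ f y) →
      (∃ C, ∀ y, f y ≤ C) → ∀ x y,
      Φ (nlOp κ f x) ≤ nlOp κ (fun z => Φ (f z)) y * Real.exp (Ψ x y))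
    -- μ₀ is an invariant linear expectation of P̄
    (μ₀ : Measure (EuclideanSpace ℝ (Fin d))) [IsProbabilityMeasure μ₀]
    (hinv : ∀ f : EuclideanSpace ℝ (Fin d) → ℝ, Measurable f → (∀ y, 0 ≤ f y) →
      (∃ C, ∀ y, f y ≤ C) → ∫ x, nlOp κ f x ∂μ₀ = ∫ x, f x ∂μ₀)
    (A : Set (EuclideanSpace ℝ (Fin d))) (hA : MeasurableSet A)
    (x₀ : EuclideanSpace ℝ (Fin d))
    (hx₀ : nlOp κ (A.indicator fun _ => (1:ℝ)) x₀ = 0) :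
    (∀ x, nlOp κ (A.indicator fun _ => (1:ℝ)) x = 0) ∧ μ₀ A = 0 := by
  have := hκ
  have hnull := measure_eq_zero_of_nlOp_indicator_eq_zero hA hx₀
  obtain ⟨hmeas₁, hnonneg₁, hbdd₁⟩ := measurable_nonneg_bddAbove_indicator_const hA zero_le_one
  have hP : ∀ x, nlOp κ (A.indicator fun _ => (1:ℝ)) x = 0 := fun x =>
    eq_zero_of_forall_nat_mul_le hΦtop (nlOp_nonneg hnonneg₁) (C := Φ 0 * Real.exp (Ψ x x₀))
      fun n => by
        obtain ⟨hmeas, hnonneg, hbdd⟩ :=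
          measurable_nonneg_bddAbove_indicator_const hA n.cast_nonneg
        have hH := hHarnack _ hmeas hnonneg hbdd x x₀
        rwa [nlOp_indicator_const_of_nonneg hA n.cast_nonneg,
          nlOp_eq_of_eqOn_compl (c := Φ 0) hnull fun y hy => by simp [hy]] at hH
  refine ⟨hP, (measureReal_eq_zero_iff).1 ?_⟩
  simpa [hP, integral_indicator_const _ hA] using (hinv _ hmeas₁ hnonneg₁ hbdd₁).symm

theorem stmt_4 {d : ℕ} {Θ : Type*} [Nonempty Θ]
    (κ : Θ → Kernel (EuclideanSpace ℝ (Fin d)) (EuclideanSpace ℝ (Fin d)))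
    (hκ : ∀ θ, IsMarkovKernel (κ θ))
    (hPmeas : ∀ f : EuclideanSpace ℝ (Fin d) → ℝ, Measurable f → (∀ y, 0 ≤ f y) →
      (∃ C, ∀ y, f y ≤ C) → Measurable (nlOp κ f))
    (Φ : ℝ → ℝ)
    (hΦmono : MonotoneOn Φ (Set.Ici 0))
    (hΦnonneg : ∀ r ∈ Set.Ici (0:ℝ), 0 ≤ Φ r)
    (hΦtop : Tendsto Φ atTop atTop)
    (Ψ : EuclideanSpace ℝ (Fin d) → EuclideanSpace ℝ (Fin d) → ℝ)
    (hΨnonneg : ∀ x y, 0 ≤ Ψ x y)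
    (hHarnack : ∀ f : EuclideanSpace ℝ (Fin d) → ℝ, Measurable f → (∀ y, 0 ≤ f y) →
      (∃ C, ∀ y, f y ≤ C) → ∀ x y,
      Φ (nlOp κ f x) ≤ nlOp κ (fun z => Φ (f z)) y * Real.exp (Ψ x y))
    -- μ₀ is an invariant linear expectation of P̄
    (μ₀ : Measure (EuclideanSpace ℝ (Fin d))) [IsProbabilityMeasure μ₀]
    (hinv : ∀ f : EuclideanSpace ℝ (Fin d) → ℝ, Measurable f → (∀ y, 0 ≤ f y) →
      (∃ C, ∀ y, f y ≤ C) → ∫ x, nlOp κ f x ∂μ₀ = ∫ x, f x ∂μ₀)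
    (A : Set (EuclideanSpace ℝ (Fin d))) (hA : MeasurableSet A)
    (x₀ : EuclideanSpace ℝ (Fin d))
    (hx₀ : nlOp κ (A.indicator fun _ => (1:ℝ)) x₀ = 0) :
    (∀ x, nlOp κ (A.indicator fun _ => (1:ℝ)) x = 0) ∧ μ₀ A = 0 :=
  stmt_4_general κ hκ Φ hΦtop Ψ hHarnack μ₀ hinv A hA x₀ hx₀
end
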